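/- arXiv:1511.04218 — 6 statements merged into one kernel-verified Lean document; each statement's English description precedes it below -/
import Mathlib

section
/- Let N ≥ 1 be a natural number and λ̃ : Fin N → ℝ. Then the determinant of A_N(λ̃) equals 1 − Σ_{k=2}^{N} (k−1)·e_k(λ̃), where e_k(λ̃) = Σ_{S ⊆ Fin N, |S| = k} ∏_{i∈S} λ̃(i) is the k-th elementary symmetric polynomial of the values λ̃(1),…,λ̃(N). Explicitly: det(A_N(λ̃)) = 1 − Σ_{i<j} λ̃(i)λ̃(j) − 2 Σ_{i<j<k} λ̃(i)λ̃(j)λ̃(k) − 3 Σ_{i<j<k<l} λ̃(i)λ̃(j)λ̃(k)λ̃(l) − … − (N−1)·∏_{i} λ̃(i). -/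
/-!
`A_N(λ̃) = diagonal (1 + λ̃) - λ̃ 1ᵀ` is a rank-one perturbation of a diagonal matrix, so by the
matrix determinant lemma (in its adjugate form, which needs no invertibility)
`det A_N(λ̃) = ∏ᵢ (1 + λ̃ᵢ) - ∑ᵢ λ̃ᵢ ∏_{j ≠ i} (1 + λ̃ⱼ)`.
Expanding both products over subsets, a subset `S` contributes `(1 - |S|) ∏_{i ∈ S} λ̃ᵢ`; grouping
by `|S|` gives the claimed formula, the terms `|S| ≤ 1` contributing exactly `1`.
-/

open Finset Matrix

theorem Finset.sum_finset_eq_empty_add_sum_singleton {ι M : Type*} [Fintype ι] [DecidableEq ι]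
    [AddCommMonoid M] {F : Finset ι → M} (hF : ∀ s, 1 < #s → F s = 0) :
    ∑ s, F s = F ∅ + ∑ i, F {i} := by
  have hsub : insert ∅ (univ.map ⟨singleton, singleton_injective⟩) ⊆ (univ : Finset (Finset ι)) :=
    subset_univ _
  rw [← sum_subset hsub, sum_insert, sum_map]
  · rfl
  · simp
  · intro s _ hs
    refine hF s ?_
    by_contra! h
    rcases Nat.le_one_iff_eq_zero_or_eq_one.mp h with h | h
    · simp_all
    · obtain ⟨a, rfl⟩ := card_eq_one.mp h
      simp at hs

namespace Matrix

variable {n R : Type*} [Fintype n] [DecidableEq n] [CommRing R]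

theorem det_add_vecMulVec_eq_add_sum_updateRow (A : Matrix n n R) (u v : n → R) :
    (A + vecMulVec u v).det = A.det + ∑ i, u i * (A.updateRow i v).det := by
  let D : AlternatingMap R (n → R) R n := detRowAlternating
  have hdet : ∀ f : n → n → R, (of f).det = D f := fun _ => rfl
  have hrows : A + vecMulVec u v = of ((fun i => u i • v) + of.symm A) := by
    ext i j; simp [vecMulVec_apply, add_comm]
  have hterm : ∀ s : Finset n, D (s.piecewise (fun i => u i • v) (of.symm A))
      = (∏ i ∈ s, u i) * D (s.piecewise (fun _ => v) (of.symm A)) := by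
    intro s
    have := D.toMultilinearMap.map_piecewise_smul u (s.piecewise (fun _ => v) (of.symm A)) s
    rw [← smul_eq_mul, ← D.coe_multilinearMap, ← this]
    congr 1
    ext i j
    by_cases hi : i ∈ s <;> simp [hi]
  -- Expanding every row `A i + u i • v` by multilinearity, a term that takes the rank-one part
  -- in two rows has two rows proportional to `v`.
  rw [hrows, hdet, D.map_add_univ, sum_finset_eq_empty_add_sum_singleton]
  · simp only [hterm, prod_singleton, piecewise_empty]
    congr 1
    refine sum_congr rfl fun i _ => ?_
    rw [← hdet, piecewise_singleton]
    rfl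
  · intro s hs
    obtain ⟨a, ha, b, hb, hab⟩ := one_lt_card.mp hs
    rw [hterm, D.map_eq_zero_of_eq _ (by simp [ha, hb]) hab, mul_zero]

theorem det_add_vecMulVec (A : Matrix n n R) (u v : n → R) :
    (A + vecMulVec u v).det = A.det + v ⬝ᵥ A.adjugate *ᵥ u := by
  rw [det_add_vecMulVec_eq_add_sum_updateRow]
  simp_rw [← cramer_transpose_apply, cramer_eq_adjugate_mulVec, ← adjugate_transpose,
    mulVec_transpose]
  rw [dotProduct_mulVec, dotProduct_comm]
  rfl

theorem det_diagonal_add_vecMulVec (d u v : n → R) :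
    (diagonal d + vecMulVec u v).det = ∏ i, d i + ∑ i, u i * v i * ∏ j ∈ univ.erase i, d j := by
  rw [det_add_vecMulVec, det_diagonal, adjugate_diagonal]
  simp only [dotProduct, mulVec_diagonal]
  congr 1
  exact sum_congr rfl fun i _ => by ring

end Matrix

theorem Finset.sum_mul_prod_erase_one_add {ι R : Type*} [DecidableEq ι] [CommSemiring R]
    (s : Finset ι) (f : ι → R) :
    ∑ i ∈ s, f i * ∏ j ∈ s.erase i, (1 + f j) = ∑ t ∈ s.powerset, #t • ∏ i ∈ t, f i := by
  calc ∑ i ∈ s, f i * ∏ j ∈ s.erase i, (1 + f j)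
      = ∑ i ∈ s, ∑ t ∈ (s.erase i).powerset, ∏ j ∈ insert i t, f j := by
        refine sum_congr rfl fun i _ => ?_
        rw [prod_one_add, mul_sum]
        refine sum_congr rfl fun t ht => (prod_insert fun hi => ?_).symm
        exact notMem_erase i s (mem_powerset.mp ht hi)
    _ = ∑ i ∈ s, ∑ t ∈ s.powerset with i ∈ t, ∏ j ∈ t, f j := by
        refine sum_congr rfl fun i hi => sum_nbij' (insert i) (·.erase i) ?_ ?_ ?_ ?_ fun _ _ => rfl
        · intro t ht
          simp only [mem_filter, mem_powerset] at ht ⊢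
          exact ⟨insert_subset hi (ht.trans (erase_subset i s)), mem_insert_self i t⟩
        · intro t ht
          simp only [mem_filter, mem_powerset] at ht ⊢
          exact erase_subset_erase i ht.1
        · intro t ht
          exact erase_insert fun hit => notMem_erase i s (mem_powerset.mp ht hit)
        · intro t ht
          exact insert_erase (mem_filter.mp ht).2
    _ = ∑ t ∈ s.powerset, ∑ i ∈ t, ∏ j ∈ t, f j :=
        sum_comm' fun i t => by simp only [mem_filter, mem_powerset]; constructor <;> grind
    _ = ∑ t ∈ s.powerset, #t • ∏ i ∈ t, f i := by simp only [sum_const]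

theorem Finset.sum_powerset_one_sub_card_mul_prod {ι R : Type*} [CommRing R]
    (s : Finset ι) (f : ι → R) :
    ∑ t ∈ s.powerset, (1 - (#t : R)) * ∏ i ∈ t, f i
      = 1 - ∑ k ∈ Icc 2 #s, ((k : R) - 1) * ∑ t ∈ powersetCard k s, ∏ i ∈ t, f i := by
  have hcard : ∀ k, ∑ t ∈ powersetCard k s, (1 - (#t : R)) * ∏ i ∈ t, f i
      = -(((k : R) - 1) * ∑ t ∈ powersetCard k s, ∏ i ∈ t, f i) := fun k => by
    rw [mul_sum, ← sum_neg_distrib]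
    refine sum_congr rfl fun t ht => ?_
    rw [(mem_powersetCard.mp ht).2]
    ring
  have hIcc : Icc 2 #s ⊆ Ico 1 (#s + 1) := fun k hk => by
    simp only [mem_Icc, mem_Ico] at hk ⊢; omega
  rw [sum_powerset, range_eq_Ico, sum_eq_sum_Ico_succ_bot (Nat.succ_pos _), powersetCard_zero,
    sum_singleton, card_empty, prod_empty, Nat.cast_zero, sub_zero, mul_one,
    sum_congr rfl fun k _ => hcard k, sum_neg_distrib, ← sub_eq_add_neg, sum_subset hIcc]
  intro k hk hk2
  obtain rfl : k = 1 := by simp only [mem_Icc, mem_Ico] at hk hk2; omega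
  simp

theorem stmt_0_general (N : ℕ) (lam : Fin N → ℝ) :
    (Matrix.of fun i j : Fin N => if i = j then (1 : ℝ) else -lam i).det
      = 1 - ∑ k ∈ Finset.Icc 2 N, ((k : ℝ) - 1) *
          ∑ S ∈ Finset.powersetCard k (Finset.univ : Finset (Fin N)), ∏ i ∈ S, lam i := by
  have hA : (Matrix.of fun i j : Fin N => if i = j then (1 : ℝ) else -lam i)
      = diagonal (1 + lam) + vecMulVec (-lam) 1 := by
    ext i j
    by_cases h : i = j
    · subst h; simp
    · simp [h]
  have hsubsets := sum_powerset_one_sub_card_mul_prod univ lam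
  rw [card_fin] at hsubsets
  rw [hA, det_diagonal_add_vecMulVec, ← hsubsets]
  simp only [Pi.add_apply, Pi.one_apply, Pi.neg_apply, mul_one, neg_mul, sum_neg_distrib]
  rw [← sub_eq_add_neg, sum_mul_prod_erase_one_add, prod_one_add, ← sum_sub_distrib]
  exact sum_congr rfl fun t _ => by rw [nsmul_eq_mul]; ring

/-- Determinant expansion of the coupling matrix `A_N` in terms of
elementary symmetric polynomials of the concern rates. -/
theorem stmt_0 (N : ℕ) (hN : 1 ≤ N) (lam : Fin N → ℝ) :
    (Matrix.of fun i j : Fin N => if i = j then (1 : ℝ) else -lam i).det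
      = 1 - ∑ k ∈ Finset.Icc 2 N, ((k : ℝ) - 1) *
          ∑ S ∈ Finset.powersetCard k (Finset.univ : Finset (Fin N)), ∏ i ∈ S, lam i :=
  stmt_0_general N lam
end

section
/- Let N ≥ 2, fix an index a ∈ Fin N, and let λ̃ : Fin N → ℝ satisfy λ̃(b) ≥ 0 for all b ≠ a and λ̃(b₀) > 0 for at least one b₀ ≠ a. Then the map t ↦ det(A_N(λ̃')) is strictly decreasing in t ∈ ℝ, where λ̃' agrees with λ̃ at every index b ≠ a and λ̃'(a) = t. In other words, the determinant of A_N is strictly decreasing in each concern rate λ̃(a), provided some other agent has a strictly positive concern rate. -/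
/-!
Write `A(λ) = diag(1 + λ) - λ 𝟙ᵀ`. Only row `a` of `A(λ)` involves `λ a`, and linearly, so
`t ↦ det A(λ[a ↦ t])` is affine. Where every `1 + λ i` is nonzero, the matrix determinant lemma
gives `det A(λ) = ∏ (1 + λ i) * (1 - ∑ λ i / (1 + λ i))`; evaluating this at two values of `t`
identifies the affine function as `P (1 - S) - t P S` with `P = ∏_{i ≠ a} (1 + λ i)` and
`S = ∑_{i ≠ a} λ i / (1 + λ i)`, and `P S > 0` under the positivity hypotheses.
-/

open Matrix Finset

variable {n : Type*} [Fintype n] [DecidableEq n]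

theorem det_diagonal_sub_of_const {K : Type*} [Field K] (d w : n → K) (hd : ∀ i, d i ≠ 0) :
    (diagonal d - of fun i _ => w i).det = (∏ i, d i) * (1 - ∑ i, w i / d i) := by
  have hfactor : diagonal d - (of fun i _ => w i) = diagonal d *
      (1 + replicateCol Unit (fun i => -(w i / d i)) * replicateRow Unit (fun _ : n => (1 : K))) := by
    ext i j
    rw [diagonal_mul]
    by_cases h : i = j <;> simp [h, hd, mul_add, mul_div_cancel₀, sub_eq_add_neg, Matrix.mul_apply]
  rw [hfactor, det_mul, det_diagonal, det_one_add_replicateCol_mul_replicateRow]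
  simp [dotProduct, sub_eq_add_neg]

theorem det_updateRow_add_smul {R : Type*} [CommRing R] (M : Matrix n n R) (j : n)
    (u v : n → R) (t : R) :
    (M.updateRow j (u + t • v)).det = (M.updateRow j u).det + t * (M.updateRow j v).det := by
  rw [det_updateRow_add, det_updateRow_smul]

def concernMatrix {R : Type*} [Ring R] (lam : n → R) : Matrix n n R :=
  of fun i j => if i = j then 1 else -lam i

section CommRing

variable {R : Type*} [CommRing R]

omit [Fintype n] in
theorem concernMatrix_eq_diagonal_sub (lam : n → R) :
    concernMatrix lam = diagonal (fun i => 1 + lam i) - of fun i _ => lam i := by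
  ext i j
  by_cases h : i = j <;> simp [concernMatrix, h]

omit [Fintype n] in
theorem concernMatrix_update_eq_updateRow (lam : n → R) (a : n) (t : R) :
    concernMatrix (Function.update lam a t) = (concernMatrix (Function.update lam a 0)).updateRow a
      (Pi.single a 1 + t • (Pi.single a 1 - 1)) := by
  ext i j
  by_cases hi : i = a
  · subst hi
    by_cases hj : j = i
    · simp [concernMatrix, hj]
    · simp [concernMatrix, hj, Ne.symm hj]
  · simp [concernMatrix, hi]

theorem exists_det_concernMatrix_update_eq_add_mul (lam : n → R) (a : n) :
    ∃ c₀ c₁ : R, ∀ t, (concernMatrix (Function.update lam a t)).det = c₀ + t * c₁ :=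
  ⟨_, _, fun t => by rw [concernMatrix_update_eq_updateRow, det_updateRow_add_smul]⟩

end CommRing

section Field

variable {K : Type*} [Field K]

theorem det_concernMatrix (lam : n → K) (hlam : ∀ i, 1 + lam i ≠ 0) :
    (concernMatrix lam).det = (∏ i, (1 + lam i)) * (1 - ∑ i, lam i / (1 + lam i)) := by
  rw [concernMatrix_eq_diagonal_sub, det_diagonal_sub_of_const _ _ hlam]

theorem det_concernMatrix_update_of_one_add_ne_zero (lam : n → K) (a : n)
    (hlam : ∀ i ≠ a, 1 + lam i ≠ 0) {t : K} (ht : 1 + t ≠ 0) :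
    (concernMatrix (Function.update lam a t)).det =
      (∏ i ∈ {a}ᶜ, (1 + lam i)) * (1 - ∑ i ∈ {a}ᶜ, lam i / (1 + lam i))
        - t * ((∏ i ∈ {a}ᶜ, (1 + lam i)) * ∑ i ∈ {a}ᶜ, lam i / (1 + lam i)) := by
  have hupdate : ∀ i, 1 + Function.update lam a t i ≠ 0 := by
    intro i
    by_cases hi : i = a
    · subst hi; simpa using ht
    · simpa [hi] using hlam i hi
  have hcompl : ∀ i ∈ ({a}ᶜ : Finset n), Function.update lam a t i = lam i := fun i hi =>
    Function.update_of_ne (by simpa using hi) _ _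
  rw [det_concernMatrix _ hupdate, Fintype.prod_eq_mul_prod_compl a,
    Fintype.sum_eq_add_sum_compl a, prod_congr rfl fun i hi => by rw [hcompl i hi],
    sum_congr rfl fun i hi => by rw [hcompl i hi], Function.update_self]
  field_simp
  ring

theorem det_concernMatrix_update [CharZero K] (lam : n → K) (a : n)
    (hlam : ∀ i ≠ a, 1 + lam i ≠ 0) (t : K) :
    (concernMatrix (Function.update lam a t)).det =
      (∏ i ∈ {a}ᶜ, (1 + lam i)) * (1 - ∑ i ∈ {a}ᶜ, lam i / (1 + lam i))
        - t * ((∏ i ∈ {a}ᶜ, (1 + lam i)) * ∑ i ∈ {a}ᶜ, lam i / (1 + lam i)) := by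
  obtain ⟨c₀, c₁, haffine⟩ := exists_det_concernMatrix_update_eq_add_mul lam a
  have h₀ := det_concernMatrix_update_of_one_add_ne_zero lam a hlam (t := 0) (by simp)
  have h₁ := det_concernMatrix_update_of_one_add_ne_zero lam a hlam (t := 1) (by norm_num)
  rw [haffine] at h₀ h₁ ⊢
  linear_combination (1 - t) * h₀ + t * h₁

end Field

theorem strictAnti_det_concernMatrix_update {K : Type*} [Field K] [LinearOrder K]
    [IsStrictOrderedRing K] (lam : n → K) (a : n) (hnonneg : ∀ b ≠ a, 0 ≤ lam b)
    (hpos : ∃ b ≠ a, 0 < lam b) :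
    StrictAnti fun t => (concernMatrix (Function.update lam a t)).det := by
  have hmem : ∀ {i}, i ∈ ({a}ᶜ : Finset n) ↔ i ≠ a := by simp
  have hone_add : ∀ i ≠ a, 0 < 1 + lam i := fun i hi => by linarith [hnonneg i hi]
  have hP : 0 < ∏ i ∈ {a}ᶜ, (1 + lam i) := prod_pos fun i hi => hone_add i (hmem.1 hi)
  have hS : 0 < ∑ i ∈ {a}ᶜ, lam i / (1 + lam i) := by
    obtain ⟨b, hba, hb⟩ := hpos
    exact sum_pos' (fun i hi => div_nonneg (hnonneg i (hmem.1 hi)) (hone_add i (hmem.1 hi)).le)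
      ⟨b, hmem.2 hba, div_pos hb (hone_add b hba)⟩
  intro x y hxy
  simp only [det_concernMatrix_update lam a fun i hi => (hone_add i hi).ne']
  exact sub_lt_sub_left (mul_lt_mul_of_pos_right hxy (mul_pos hP hS)) _

theorem stmt_1_general (N : ℕ) (a : Fin N) (lam : Fin N → ℝ)
    (hnonneg : ∀ b, b ≠ a → 0 ≤ lam b) (hpos : ∃ b, b ≠ a ∧ 0 < lam b) :
    StrictAnti fun t : ℝ =>
      (Matrix.of fun i j : Fin N =>
        if i = j then (1 : ℝ) else -(Function.update lam a t i)).det :=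
  strictAnti_det_concernMatrix_update lam a hnonneg hpos

/-- The determinant of `A_N` is strictly decreasing in each concern rate,
provided some other agent has a strictly positive concern rate. -/
theorem stmt_1 (N : ℕ) (hN : 2 ≤ N) (a : Fin N) (lam : Fin N → ℝ)
    (hnonneg : ∀ b, b ≠ a → 0 ≤ lam b) (hpos : ∃ b, b ≠ a ∧ 0 < lam b) :
    StrictAnti fun t : ℝ =>
      (Matrix.of fun i j : Fin N =>
        if i = j then (1 : ℝ) else -(Function.update lam a t i)).det :=
  stmt_1_general N a lam hnonneg hpos
end

section
/- Let N ≥ 2 be a natural number and λ : Fin N → ℝ be concern rates with 0 ≤ λ(a) ≤ 1 for every a and ∏_{a} λ(a) < 1. Set λ̃(a) := λ(a)/(N−1). Then det(A_N(λ̃)) > 0; in particular the matrix A_N(λ̃) is invertible. -/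
/-!
Writing `t i = λ i / (N - 1)`, the matrix is `diag (1 + t) * (1 - u 𝟙ᵀ)` with
`u i = t i / (1 + t i)`, so by the matrix determinant lemma its determinant is
`∏ (1 + t i) * (1 - ∑ u i)`. Each `u i = λ i / (N - 1 + λ i)` is at most `1 / N` because
`λ i ≤ 1`, and strictly less for some `i` because `∏ λ i < 1`; hence `∑ u i < 1`.
-/

open Matrix Finset

theorem det_of_ite_one_neg {K n : Type*} [Field K] [Fintype n] [DecidableEq n] (t : n → K)
    (ht : ∀ i, 1 + t i ≠ 0) :
    (of fun i j => if i = j then 1 else -t i).det =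
      (∏ i, (1 + t i)) * (1 - ∑ i, t i / (1 + t i)) := by
  have hfactor : (of fun i j => if i = j then 1 else -t i) = diagonal (1 + t) *
      (1 + replicateCol Unit (fun i => -(t i / (1 + t i))) *
        replicateRow Unit (fun _ : n => (1 : K)) : Matrix n n K) := by
    ext i j
    rw [diagonal_mul, Matrix.add_apply, mul_apply]
    rcases eq_or_ne i j with rfl | hij
    · simp [mul_add, mul_div_cancel₀ _ (ht i)]
    · simp [one_apply_ne hij, hij, mul_div_cancel₀ _ (ht i)]
  rw [hfactor, det_mul, det_diagonal, det_one_add_replicateCol_mul_replicateRow]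
  simp [dotProduct, sub_eq_add_neg]

theorem det_of_ite_one_neg_pos {n : Type*} [Fintype n] [DecidableEq n] {t : n → ℝ}
    (ht : ∀ i, 0 ≤ t i) (hsum : ∑ i, t i / (1 + t i) < 1) :
    0 < (of fun i j => if i = j then 1 else -t i).det := by
  have hpos : ∀ i, 0 < 1 + t i := fun i => by linarith [ht i]
  rw [det_of_ite_one_neg t fun i => (hpos i).ne']
  exact mul_pos (prod_pos fun i _ => hpos i) (sub_pos.2 hsum)

theorem div_div_one_add_div {c l : ℝ} (hc : c ≠ 0) : l / c / (1 + l / c) = l / (c + l) := by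
  field_simp

/- For `n = 1` the left-hand sides of the next two lemmas are `0`, as `l / 0 = 0`. -/

theorem div_sub_one_div_one_add_div_le {n l : ℝ} (hn : 1 ≤ n) (hl : 0 ≤ l) (hl1 : l ≤ 1) :
    l / (n - 1) / (1 + l / (n - 1)) ≤ 1 / n := by
  rcases (sub_nonneg.2 hn).eq_or_lt with h | h
  · simp [← h]; linarith
  · rw [div_div_one_add_div h.ne', div_le_div_iff₀ (by positivity) (by positivity)]
    nlinarith

theorem div_sub_one_div_one_add_div_lt {n l : ℝ} (hn : 1 ≤ n) (hl : 0 ≤ l) (hl1 : l < 1) :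
    l / (n - 1) / (1 + l / (n - 1)) < 1 / n := by
  rcases (sub_nonneg.2 hn).eq_or_lt with h | h
  · simp [← h]; linarith
  · rw [div_div_one_add_div h.ne', div_lt_div_iff₀ (by positivity) (by positivity)]
    nlinarith

theorem sum_lt_one_of_le_inv_card {ι : Type*} [Fintype ι] {f : ι → ℝ}
    (hf : ∀ i, f i ≤ 1 / Fintype.card ι) {a : ι} (ha : f a < 1 / Fintype.card ι) :
    ∑ i, f i < 1 := by
  have hcard : (Fintype.card ι : ℝ) ≠ 0 := Nat.cast_ne_zero.2 (Fintype.card_pos_iff.2 ⟨a⟩).ne'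
  calc ∑ i, f i < ∑ _i : ι, 1 / (Fintype.card ι : ℝ) :=
        sum_lt_sum (fun i _ => hf i) ⟨a, mem_univ a, ha⟩
    _ = 1 := by simp [hcard]

theorem exists_lt_one_of_prod_lt_one {ι : Type*} [Fintype ι] {f : ι → ℝ}
    (h : ∏ i, f i < 1) : ∃ i, f i < 1 := by
  by_contra! hf
  exact h.not_ge (one_le_prod fun i _ => hf i)

theorem stmt_2_general (N : ℕ) (lam : Fin N → ℝ)
    (h0 : ∀ a, 0 ≤ lam a) (h1 : ∀ a, lam a ≤ 1) (hprod : ∏ a, lam a < 1) :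
    0 < (Matrix.of fun i j : Fin N =>
          if i = j then (1 : ℝ) else -(lam i / ((N : ℝ) - 1))).det ∧
    IsUnit (Matrix.of fun i j : Fin N =>
          if i = j then (1 : ℝ) else -(lam i / ((N : ℝ) - 1))) := by
  have hN : ∀ i : Fin N, (1 : ℝ) ≤ N := fun i => by exact_mod_cast i.pos
  obtain ⟨a, ha⟩ := exists_lt_one_of_prod_lt_one hprod
  have hsum : ∑ i, lam i / (N - 1) / (1 + lam i / (N - 1)) < 1 := by
    refine sum_lt_one_of_le_inv_card (a := a) (fun i => ?_) ?_ <;> rw [Fintype.card_fin]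
    · exact div_sub_one_div_one_add_div_le (hN i) (h0 i) (h1 i)
    · exact div_sub_one_div_one_add_div_lt (hN a) (h0 a) ha
  have hdet := det_of_ite_one_neg_pos (fun i => div_nonneg (h0 i) (sub_nonneg.2 (hN i))) hsum
  exact ⟨hdet, (isUnit_iff_isUnit_det _).2 hdet.ne'.isUnit⟩

/-- Under the standing assumption on the concern rates (all in `[0,1]` with
product `< 1`), the matrix `A_N` has strictly positive determinant and is invertible. -/
theorem stmt_2 (N : ℕ) (hN : 2 ≤ N) (lam : Fin N → ℝ)
    (h0 : ∀ a, 0 ≤ lam a) (h1 : ∀ a, lam a ≤ 1) (hprod : ∏ a, lam a < 1) :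
    0 < (Matrix.of fun i j : Fin N =>
          if i = j then (1 : ℝ) else -(lam i / ((N : ℝ) - 1))).det ∧
    IsUnit (Matrix.of fun i j : Fin N =>
          if i = j then (1 : ℝ) else -(lam i / ((N : ℝ) - 1))) :=
  stmt_2_general N lam h0 h1 hprod
end

section
/- Let N ≥ 2 and λ : Fin N → ℝ with 0 ≤ λ(a) ≤ 1 for all a and ∏_a λ(a) < 1, and set λ̃(a) := λ(a)/(N−1). Then for every family J : Fin N → ℝ there exists a unique family π : Fin N → ℝ satisfying the coupled best-response system π(a) − λ̃(a) · Σ_{b ≠ a} π(b) = J(a) for every a ∈ Fin N. -/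
/-!
Write `t a = λ(a) / (N - 1)` and `S = ∑ b, π b`. The equation at `a` reads
`(1 + t a) π a = J a + t a S`, so a solution of the homogeneous system satisfies
`π a = t a / (1 + t a) · S`; summing gives `S = (∑ a, t a / (1 + t a)) · S`. Since `λ(a) ≤ 1`,
each weight `t a / (1 + t a)` is at most `1 / N`, strictly so where `λ(a) < 1`, and such an `a`
exists because `∏ λ < 1`. Hence the weights sum to less than `1`, forcing `S = 0` and then
`π = 0`. The system is thus an injective linear endomorphism of `ℝ^N`, hence bijective.
-/

open Finset Function

section CouplingMap

variable {ι : Type*} [Fintype ι] [DecidableEq ι]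

/-- The map `π ↦ A_N(t) π` of the paper. -/
def couplingMap (t : ι → ℝ) : (ι → ℝ) →ₗ[ℝ] (ι → ℝ) where
  toFun π a := π a - t a * ∑ b ∈ univ.erase a, π b
  map_add' π σ := by
    ext a
    simp only [Pi.add_apply, sum_add_distrib]
    ring
  map_smul' c π := by
    ext a
    simp only [Pi.smul_apply, smul_eq_mul, RingHom.id_apply, ← mul_sum]
    ring

@[simp]
theorem couplingMap_apply (t : ι → ℝ) (π : ι → ℝ) (a : ι) :
    couplingMap t π a = π a - t a * ∑ b ∈ univ.erase a, π b :=
  rfl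

theorem couplingMap_injective {t : ι → ℝ} (ht : ∀ a, 0 ≤ t a)
    (hsum : ∑ a, t a / (1 + t a) < 1) : Injective (couplingMap t) := by
  rw [← LinearMap.ker_eq_bot, LinearMap.ker_eq_bot']
  intro π hπ
  set S := ∑ b, π b
  have hpos : ∀ a, 0 < 1 + t a := fun a => by linarith [ht a]
  have hcoord : ∀ a, π a = t a / (1 + t a) * S := by
    intro a
    have h := congrFun hπ a
    rw [couplingMap_apply, sum_erase_eq_sub (mem_univ a), Pi.zero_apply] at h
    field_simp [(hpos a).ne']
    linear_combination h
  have hS : S = 0 := by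
    have hfix : S = (∑ a, t a / (1 + t a)) * S := by
      rw [sum_mul]
      exact sum_congr rfl fun a _ => hcoord a
    have hfactor : (1 - ∑ a, t a / (1 + t a)) * S = 0 := by linear_combination hfix
    exact (mul_eq_zero.mp hfactor).resolve_left (by linarith)
  ext a
  simp [hcoord a, hS]

end CouplingMap

section Weights

variable {n x : ℝ}

theorem scaled_weight_le (hn : 1 < n) (hx0 : 0 ≤ x) (hx1 : x ≤ 1) :
    x / (n - 1) / (1 + x / (n - 1)) ≤ 1 / n := by
  have hn1 : 0 < n - 1 := by linarith
  rw [one_add_div hn1.ne', div_div_div_cancel_right₀ hn1.ne',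
    div_le_div_iff₀ (by linarith) (by linarith)]
  nlinarith

theorem scaled_weight_lt (hn : 1 < n) (hx0 : 0 ≤ x) (hx1 : x < 1) :
    x / (n - 1) / (1 + x / (n - 1)) < 1 / n := by
  have hn1 : 0 < n - 1 := by linarith
  rw [one_add_div hn1.ne', div_div_div_cancel_right₀ hn1.ne',
    div_lt_div_iff₀ (by linarith) (by linarith)]
  nlinarith

end Weights

theorem sum_scaled_weight_lt_one {ι : Type*} [Fintype ι] (hcard : 2 ≤ Fintype.card ι)
    {lam : ι → ℝ} (h0 : ∀ a, 0 ≤ lam a) (h1 : ∀ a, lam a ≤ 1) (hprod : ∏ a, lam a < 1) :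
    ∑ a, lam a / ((Fintype.card ι : ℝ) - 1) / (1 + lam a / ((Fintype.card ι : ℝ) - 1)) < 1 := by
  have hn : (1 : ℝ) < Fintype.card ι := by exact_mod_cast hcard
  obtain ⟨a₀, ha₀⟩ : ∃ a, lam a < 1 := by
    by_contra! hge
    exact hprod.not_ge (one_le_prod fun a _ => hge a)
  calc _ < ∑ _a : ι, 1 / (Fintype.card ι : ℝ) :=
        sum_lt_sum (fun a _ => scaled_weight_le hn (h0 a) (h1 a))
          ⟨a₀, mem_univ a₀, scaled_weight_lt hn (h0 a₀) ha₀⟩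
    _ = 1 := by
      rw [sum_const, card_univ, nsmul_eq_mul]
      field_simp

/-- Existence and uniqueness of the solution of the coupled best-response linear system
under the standing assumption on the concern rates. -/
theorem stmt_6 (N : ℕ) (hN : 2 ≤ N) (lam : Fin N → ℝ)
    (h0 : ∀ a, 0 ≤ lam a) (h1 : ∀ a, lam a ≤ 1) (hprod : ∏ a, lam a < 1)
    (J : Fin N → ℝ) :
    ∃! π : Fin N → ℝ, ∀ a : Fin N,
      π a - (lam a / ((N : ℝ) - 1)) * ∑ b ∈ Finset.univ.erase a, π b = J a := by
  have hN1 : (0 : ℝ) < N - 1 := by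
    have : (2 : ℝ) ≤ N := by exact_mod_cast hN
    linarith
  have hinj : Injective (couplingMap fun a => lam a / ((N : ℝ) - 1)) := by
    refine couplingMap_injective (fun a => div_nonneg (h0 a) hN1.le) ?_
    simpa using sum_scaled_weight_lt_one (by simpa using hN) h0 h1 hprod
  have hbij : Bijective (couplingMap fun a => lam a / ((N : ℝ) - 1)) :=
    ⟨hinj, LinearMap.injective_iff_surjective.mp hinj⟩
  simpa only [funext_iff, couplingMap_apply] using hbij.existsUnique J
end

section
/- Let 𝔸 be a nonempty finite index set, w : 𝔸 → ℝ with w(a) > 0 for every a, and for each a ∈ 𝔸 let g^a : ℝ² → ℝ be strictly convex and differentiable. Let z ∈ ℝ² and let (z^a)_{a∈𝔸} be a family in ℝ² with Σ_{a∈𝔸} w(a)·z^a = z. Then (z^a) attains the infimum g^w(z) = inf { Σ_a w(a)·g^a(y^a) : Σ_a w(a)·y^a = z } — i.e. Σ_a w(a)·g^a(z^a) ≤ Σ_a w(a)·g^a(y^a) for every family (y^a) with Σ_a w(a)·y^a = z — if and only if there exists ϑ ∈ ℝ² such that ∇g^a(z^a) = −ϑ for all a ∈ 𝔸. -/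
/-!
If all gradients `∇g^a(z^a)` equal `-ϑ`, the convex gradient inequality
`g^a(z^a) + ⟪-ϑ, y^a - z^a⟫ ≤ g^a(y^a)`, weighted by `w(a)` and summed, gives minimality, because the
constraint makes the weighted sum of the linear terms vanish. Conversely, at a minimizer one may
move `z^a` by `v / w(a)` and `z^b` by `-v / w(b)` without leaving the constraint; the derivative of the
objective along this line, `⟪∇g^a(z^a) - ∇g^b(z^b), v⟫`, vanishes at the minimum for every `v`.
-/

open scoped RealInnerProductSpace Gradient

section

variable {E : Type*} [NormedAddCommGroup E] [InnerProductSpace ℝ E] [CompleteSpace E]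

lemma DifferentiableAt.hasDerivAt_comp_add_smul {f : E → ℝ} {x : E}
    (hf : DifferentiableAt ℝ f x) (v : E) :
    HasDerivAt (fun t : ℝ => f (x + t • v)) ⟪∇ f x, v⟫ 0 := by
  rw [inner_gradient_left]
  exact hf.hasFDerivAt.hasLineDerivAt v

lemma ConvexOn.add_inner_gradient_le {f : E → ℝ} (hconv : ConvexOn ℝ Set.univ f) {x : E}
    (hf : DifferentiableAt ℝ f x) (y : E) :
    f x + ⟪∇ f x, y - x⟫ ≤ f y := by
  have hline : ConvexOn ℝ Set.univ (fun t : ℝ => f (x + t • (y - x))) := by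
    simpa [Function.comp_def, AffineMap.lineMap_apply_module', add_comm] using
      hconv.comp_affineMap (AffineMap.lineMap x y)
  have hslope := hline.le_slope_of_hasDerivAt (Set.mem_univ 0) (Set.mem_univ 1) one_pos
    (hf.hasDerivAt_comp_add_smul (y - x))
  rw [slope_def_field] at hslope
  simp only [one_smul, zero_smul, add_zero, add_sub_cancel, sub_zero, div_one] at hslope
  linarith

section

variable {A : Type*} [Fintype A] {w : A → ℝ} {g : A → E → ℝ} {x : A → E}

lemma sum_mul_inner_gradient_eq_zero_of_le (hg : ∀ a, DifferentiableAt ℝ (g a) (x a)) (d : A → E)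
    (hmin : ∀ t : ℝ, ∑ a, w a * g a (x a) ≤ ∑ a, w a * g a (x a + t • d a)) :
    ∑ a, w a * ⟪∇ (g a) (x a), d a⟫ = 0 := by
  have hlocal : IsLocalMin (fun t : ℝ => ∑ a, w a * g a (x a + t • d a)) 0 :=
    Filter.Eventually.of_forall fun t => by simpa using hmin t
  exact hlocal.hasDerivAt_eq_zero <|
    HasDerivAt.fun_sum fun a _ => ((hg a).hasDerivAt_comp_add_smul (d a)).const_mul (w a)

lemma gradient_eq_of_forall_sum_le (hw : ∀ a, w a ≠ 0) (hg : ∀ a, DifferentiableAt ℝ (g a) (x a))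
    (hmin : ∀ y : A → E, ∑ a, w a • y a = ∑ a, w a • x a →
      ∑ a, w a * g a (x a) ≤ ∑ a, w a * g a (y a)) (a b : A) :
    ∇ (g a) (x a) = ∇ (g b) (x b) := by
  classical
  refine ext_inner_right ℝ fun v => ?_
  let d : A → E := Pi.single a ((w a)⁻¹ • v) - Pi.single b ((w b)⁻¹ • v)
  have hd : ∀ c, w c • d c = (Pi.single a v : A → E) c - (Pi.single b v : A → E) c := by
    intro c
    simp only [d, Pi.sub_apply, smul_sub, Pi.single_apply]
    split_ifs <;> simp_all [smul_smul]
  have hfeas : ∀ t : ℝ, ∑ c, w c • (x c + t • d c) = ∑ c, w c • x c := by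
    intro t
    simp [smul_add, smul_comm (w _) t, hd, Finset.sum_add_distrib, ← Finset.smul_sum]
  have hstat := sum_mul_inner_gradient_eq_zero_of_le hg d fun t => hmin _ (hfeas t)
  simp_rw [← real_inner_smul_right, hd, inner_sub_right, Finset.sum_sub_distrib] at hstat
  simpa only [Pi.single_apply, apply_ite, inner_zero_right, Finset.sum_ite_eq', Finset.mem_univ,
    if_true, sub_eq_zero] using hstat

lemma sum_mul_le_of_gradient_eq (hw : ∀ a, 0 ≤ w a) (hconv : ∀ a, ConvexOn ℝ Set.univ (g a))
    (hg : ∀ a, DifferentiableAt ℝ (g a) (x a)) {ϑ : E} (hϑ : ∀ a, ∇ (g a) (x a) = ϑ)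
    {y : A → E} (hy : ∑ a, w a • y a = ∑ a, w a • x a) :
    ∑ a, w a * g a (x a) ≤ ∑ a, w a * g a (y a) := by
  have hshift : ∑ a, w a * ⟪ϑ, y a - x a⟫ = 0 := by
    simp_rw [← real_inner_smul_right, ← inner_sum, smul_sub, Finset.sum_sub_distrib, hy, sub_self,
      inner_zero_right]
  calc ∑ a, w a * g a (x a) = ∑ a, w a * (g a (x a) + ⟪ϑ, y a - x a⟫) := by
        simp only [mul_add, Finset.sum_add_distrib, hshift, add_zero]
    _ ≤ ∑ a, w a * g a (y a) := by
        gcongr with a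
        · exact hw a
        · exact hϑ a ▸ (hconv a).add_inner_gradient_le (hg a) (y a)

end

end

theorem stmt_7_general {A : Type*} [Fintype A]
    (w : A → ℝ) (hw : ∀ a, 0 < w a)
    (g : A → EuclideanSpace ℝ (Fin 2) → ℝ)
    (hconv : ∀ a, StrictConvexOn ℝ Set.univ (g a))
    (hdiff : ∀ a, Differentiable ℝ (g a))
    (z : EuclideanSpace ℝ (Fin 2)) (za : A → EuclideanSpace ℝ (Fin 2))
    (hsum : (∑ a, w a • za a) = z) :
    (∀ ya : A → EuclideanSpace ℝ (Fin 2), (∑ a, w a • ya a) = z →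
        ∑ a, w a * g a (za a) ≤ ∑ a, w a * g a (ya a)) ↔
      ∃ ϑ : EuclideanSpace ℝ (Fin 2), ∀ a, gradient (g a) (za a) = -ϑ := by
  subst hsum
  constructor
  · intro hmin
    rcases isEmpty_or_nonempty A with _ | ⟨⟨a₀⟩⟩
    · exact ⟨0, isEmptyElim⟩
    · refine ⟨-∇ (g a₀) (za a₀), fun a => ?_⟩
      rw [neg_neg]
      exact gradient_eq_of_forall_sum_le (fun a => (hw a).ne') (fun a => hdiff a _) hmin a a₀
  · rintro ⟨ϑ, hϑ⟩ ya hya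
    exact sum_mul_le_of_gradient_eq (fun a => (hw a).le) (fun a => (hconv a).convexOn)
      (fun a => hdiff a _) hϑ hya

/-- Lagrange-multiplier characterization of the minimizers in the weighted-dilated
infimal convolution: a feasible family attains the infimum iff all the gradients
`∇g^a(z^a)` coincide with a common value `-ϑ`. -/
theorem stmt_7 {A : Type*} [Fintype A] [Nonempty A]
    (w : A → ℝ) (hw : ∀ a, 0 < w a)
    (g : A → EuclideanSpace ℝ (Fin 2) → ℝ)
    (hconv : ∀ a, StrictConvexOn ℝ Set.univ (g a))
    (hdiff : ∀ a, Differentiable ℝ (g a))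
    (z : EuclideanSpace ℝ (Fin 2)) (za : A → EuclideanSpace ℝ (Fin 2))
    (hsum : (∑ a, w a • za a) = z) :
    (∀ ya : A → EuclideanSpace ℝ (Fin 2), (∑ a, w a • ya a) = z →
        ∑ a, w a * g a (za a) ≤ ∑ a, w a * g a (ya a)) ↔
      ∃ ϑ : EuclideanSpace ℝ (Fin 2), ∀ a, gradient (g a) (za a) = -ϑ :=
  stmt_7_general w hw g hconv hdiff z za hsum
end

section
/- Let 𝔸 be a nonempty finite index set, w : 𝔸 → ℝ with w(a) > 0 for every a and Σ_{a∈𝔸} w(a) = 1, and for each a ∈ 𝔸 let g^a : ℝ² → ℝ be convex, differentiable and bounded below (so that g^w(z) := inf { Σ_a w(a)·g^a(z^a) : Σ_a w(a)·z^a = z } is finite for every z). Let z ∈ ℝ², let (z^a) be a family with Σ_a w(a)·z^a = z, and suppose there exists ϑ ∈ ℝ² with ∇g^a(z^a) = −ϑ for all a. Then g^w(z) = Σ_a w(a)·g^a(z^a), and g^w is differentiable at z with gradient ∇g^w(z) = −ϑ. -/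
/-!
Each `g a` lies above its tangent plane at `za a`, and all these tangent planes have the same
slope `-ϑ`. Averaging with weights `w` therefore bounds every competitor in the infimum defining
`g^w(z')` from below by the affine function `z' ↦ Σ w a g a (za a) + ⟪-ϑ, z' - z⟫`, while
translating every `za a` by `z' - z` gives a competitor, hence an upper bound which is
differentiable with gradient `-ϑ` at `z`. Both bounds touch `g^w` at `z`, so `g^w` is squeezed.
-/

open Filter Topology Asymptotics

section Calculus

variable {E : Type*} [NormedAddCommGroup E] [NormedSpace ℝ E]

theorem ConvexOn.apply_add_le_of_hasFDerivAt {s : Set E} {f : E → ℝ} {f' : E →L[ℝ] ℝ} {x y : E}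
    (hf : ConvexOn ℝ s f) (hx : x ∈ s) (hy : y ∈ s) (hf' : HasFDerivAt f f' x) :
    f x + f' (y - x) ≤ f y := by
  set ℓ : ℝ →ᵃ[ℝ] E := AffineMap.lineMap x y
  have hℓ : ConvexOn ℝ (ℓ ⁻¹' s) (f ∘ ℓ) := hf.comp_affineMap ℓ
  have hderiv : HasDerivAt (f ∘ ℓ) (f' (y - x)) 0 := by
    have hf'0 : HasFDerivAt f f' (ℓ 0) := by simpa [ℓ] using hf'
    exact hf'0.comp_hasDerivAt 0 AffineMap.hasDerivAt_lineMap
  have hslope := hℓ.le_slope_of_hasDerivAt (by simpa [ℓ] using hx) (by simpa [ℓ] using hy)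
    zero_lt_one hderiv
  simp only [slope, Function.comp_apply, ℓ, AffineMap.lineMap_apply_zero,
    AffineMap.lineMap_apply_one, sub_zero, inv_one, vsub_eq_sub, smul_eq_mul, one_mul] at hslope
  linarith

theorem HasFDerivAt.of_tangent_le_of_le {f u : E → ℝ} {f' : E →L[ℝ] ℝ} {x : E}
    (hlow : ∀ᶠ y in 𝓝 x, f x + f' (y - x) ≤ f y) (hup : ∀ᶠ y in 𝓝 x, f y ≤ u y)
    (hux : u x = f x) (hu : HasFDerivAt u f' x) : HasFDerivAt f f' x := by
  refine HasFDerivAt.of_isLittleO (IsBigO.trans_isLittleO ?_ hu.isLittleO)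
  refine IsBigO.of_bound' ?_
  filter_upwards [hlow, hup] with y hly huy
  rw [Real.norm_of_nonneg (by linarith), hux]
  exact (by linarith : _ ≤ _).trans (Real.le_norm_self _)

end Calculus

section InfConvolution

variable {ι E : Type*} [Fintype ι] [NormedAddCommGroup E] [NormedSpace ℝ E]
  {w : ι → ℝ} {g : ι → E → ℝ}

def feasibleValues (w : ι → ℝ) (g : ι → E → ℝ) (z : E) : Set ℝ :=
  { r : ℝ | ∃ za : ι → E, (∑ a, w a • za a) = z ∧ r = ∑ a, w a * g a (za a) }

noncomputable def weightedInfConv (w : ι → ℝ) (g : ι → E → ℝ) (z : E) : ℝ :=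
  sInf (feasibleValues w g z)

theorem sum_mul_apply_add_mem_feasibleValues (hw1 : ∑ a, w a = 1) (za : ι → E) (v : E) :
    ∑ a, w a * g a (za a + v) ∈ feasibleValues w g (∑ a, w a • za a + v) := by
  refine ⟨fun a => za a + v, ?_, rfl⟩
  simp only [smul_add, Finset.sum_add_distrib, ← Finset.sum_smul, hw1, one_smul]

theorem tangent_le_of_mem_feasibleValues (hw : ∀ a, 0 ≤ w a)
    (hconv : ∀ a, ConvexOn ℝ Set.univ (g a)) {φ : E →L[ℝ] ℝ} {za : ι → E}
    (hφ : ∀ a, HasFDerivAt (g a) φ (za a)) {z' : E} {r : ℝ}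
    (hr : r ∈ feasibleValues w g z') :
    ∑ a, w a * g a (za a) + φ (z' - ∑ a, w a • za a) ≤ r := by
  obtain ⟨ya, rfl, rfl⟩ := hr
  have htangent : ∀ a, w a * (g a (za a) + φ (ya a - za a)) ≤ w a * g a (ya a) := fun a =>
    mul_le_mul_of_nonneg_left
      ((hconv a).apply_add_le_of_hasFDerivAt trivial trivial (hφ a)) (hw a)
  calc ∑ a, w a * g a (za a) + φ (∑ a, w a • ya a - ∑ a, w a • za a)
      = ∑ a, w a * (g a (za a) + φ (ya a - za a)) := by
        simp only [← Finset.sum_sub_distrib, ← smul_sub, map_sum, map_smul, smul_eq_mul,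
          mul_add, Finset.sum_add_distrib]
    _ ≤ ∑ a, w a * g a (ya a) := Finset.sum_le_sum fun a _ => htangent a

theorem hasFDerivAt_weightedInfConv (hw : ∀ a, 0 ≤ w a) (hw1 : ∑ a, w a = 1)
    (hconv : ∀ a, ConvexOn ℝ Set.univ (g a)) {φ : E →L[ℝ] ℝ} {za : ι → E}
    (hφ : ∀ a, HasFDerivAt (g a) φ (za a)) {z : E} (hsum : ∑ a, w a • za a = z) :
    weightedInfConv w g z = ∑ a, w a * g a (za a) ∧ HasFDerivAt (weightedInfConv w g) φ z := by
  subst hsum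
  set z := ∑ a, w a • za a
  set u : E → ℝ := fun z' => ∑ a, w a * g a (za a + (z' - z))
  have hmem : ∀ z', u z' ∈ feasibleValues w g z' := fun z' => by
    simpa [u, z] using sum_mul_apply_add_mem_feasibleValues (g := g) hw1 za (z' - z)
  have hlow : ∀ z', ∀ r ∈ feasibleValues w g z', ∑ a, w a * g a (za a) + φ (z' - z) ≤ r :=
    fun z' r => tangent_le_of_mem_feasibleValues hw hconv hφ
  have hle : ∀ z', weightedInfConv w g z' ≤ u z' := fun z' =>
    csInf_le ⟨_, hlow z'⟩ (hmem z')
  have hge : ∀ z', ∑ a, w a * g a (za a) + φ (z' - z) ≤ weightedInfConv w g z' := fun z' =>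
    le_csInf ⟨_, hmem z'⟩ (hlow z')
  have hval : weightedInfConv w g z = ∑ a, w a * g a (za a) :=
    le_antisymm (by simpa [u] using hle z) (by simpa using hge z)
  have hu : HasFDerivAt u φ z := by
    have hshift : ∀ a, HasFDerivAt (fun z' => g a (za a + (z' - z))) φ z := fun a => by
      have hφa : HasFDerivAt (g a) φ (za a + (z - z)) := by simpa using hφ a
      exact hφa.comp z (((hasFDerivAt_id z).sub_const z).const_add (za a))
    have h := HasFDerivAt.fun_sum (u := Finset.univ) fun a _ => (hshift a).const_mul (w a)
    simpa [← Finset.sum_smul, hw1] using h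
  refine ⟨hval, HasFDerivAt.of_tangent_le_of_le (u := u) ?_ (Eventually.of_forall hle) ?_ hu⟩
  · exact Eventually.of_forall fun z' => hval ▸ hge z'
  · simp [u, hval]

end InfConvolution

theorem stmt_9_general {A : Type*} [Fintype A]
    (w : A → ℝ) (hw : ∀ a, 0 < w a) (hw1 : (∑ a, w a) = 1)
    (g : A → EuclideanSpace ℝ (Fin 2) → ℝ)
    (hconv : ∀ a, ConvexOn ℝ Set.univ (g a))
    (hdiff : ∀ a, Differentiable ℝ (g a))
    (gw : EuclideanSpace ℝ (Fin 2) → ℝ)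
    (hgw : ∀ z, gw z = sInf { r : ℝ | ∃ za : A → EuclideanSpace ℝ (Fin 2),
        (∑ a, w a • za a) = z ∧ r = ∑ a, w a * g a (za a) })
    (z : EuclideanSpace ℝ (Fin 2)) (za : A → EuclideanSpace ℝ (Fin 2))
    (hsum : (∑ a, w a • za a) = z)
    (ϑ : EuclideanSpace ℝ (Fin 2)) (hgrad : ∀ a, gradient (g a) (za a) = -ϑ) :
    gw z = ∑ a, w a * g a (za a) ∧ HasGradientAt gw (-ϑ) z := by
  have hgw_eq : gw = weightedInfConv w g := funext hgw
  have hφ : ∀ a, HasGradientAt (g a) (-ϑ) (za a) := fun a =>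
    hgrad a ▸ (hdiff a (za a)).hasGradientAt
  subst hgw_eq
  exact hasFDerivAt_weightedInfConv (fun a => (hw a).le) hw1 hconv hφ hsum

/-- If a feasible family has all gradients equal to `-ϑ`, then it attains the
weighted-dilated infimal convolution and `g^w` has gradient `-ϑ` at `z`. -/
theorem stmt_9 {A : Type*} [Fintype A] [Nonempty A]
    (w : A → ℝ) (hw : ∀ a, 0 < w a) (hw1 : (∑ a, w a) = 1)
    (g : A → EuclideanSpace ℝ (Fin 2) → ℝ)
    (hconv : ∀ a, ConvexOn ℝ Set.univ (g a))
    (hdiff : ∀ a, Differentiable ℝ (g a))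
    (hbdd : ∀ a, BddBelow (Set.range (g a)))
    (gw : EuclideanSpace ℝ (Fin 2) → ℝ)
    (hgw : ∀ z, gw z = sInf { r : ℝ | ∃ za : A → EuclideanSpace ℝ (Fin 2),
        (∑ a, w a • za a) = z ∧ r = ∑ a, w a * g a (za a) })
    (z : EuclideanSpace ℝ (Fin 2)) (za : A → EuclideanSpace ℝ (Fin 2))
    (hsum : (∑ a, w a • za a) = z)
    (ϑ : EuclideanSpace ℝ (Fin 2)) (hgrad : ∀ a, gradient (g a) (za a) = -ϑ) :
    gw z = ∑ a, w a * g a (za a) ∧ HasGradientAt gw (-ϑ) z :=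
  stmt_9_general w hw hw1 g hconv hdiff gw hgw z za hsum ϑ hgrad
end
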